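/- arXiv:1812.06383 — 5 statements merged into one kernel-verified Lean document; each statement's English description precedes it below -/
import Mathlib

section
/- Let μ, δ, q > 0 with 2μ > qδ². Then ∫_{log(q)/δ}^{∞} e^{-(2μ/(qδ) - δ)x}(1 - q e^{-δx})² dx = (2 q^{1 - 2μ/(qδ²)} / δ) · Γ(2μ/(qδ²) - 1) / Γ(2μ/(qδ²) + 2). -/
/-!
With `s = 2μ/(qδ²)` the decay rate is `δ(s - 1)`, and expanding the square turns the integrand
into `e^{-δ(s-1)x} - 2q e^{-δsx} + q² e^{-δ(s+1)x}`. At the lower limit `x = log q / δ` each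
`e^{-δtx}` equals `q^{-t}`, so the integral is
`q^{1-s}/δ · (1/(s-1) - 2/s + 1/(s+1)) = 2 q^{1-s} / (δ (s-1) s (s+1))`,
and `(s-1) s (s+1) = Γ(s+2) / Γ(s-1)`.
-/

open Real MeasureTheory Set

lemma integral_exp_neg_mul_Ioi {b : ℝ} (hb : 0 < b) (c : ℝ) :
    ∫ x in Ioi c, exp (-b * x) = exp (-b * c) / b := by
  rw [integral_exp_mul_Ioi (neg_neg_of_pos hb), neg_div_neg_eq]

lemma exp_neg_mul_mul_one_sub_mul_exp_sq (b δ q x : ℝ) :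
    exp (-b * x) * (1 - q * exp (-δ * x)) ^ 2
      = exp (-b * x) - 2 * q * exp (-(b + δ) * x) + q ^ 2 * exp (-(b + 2 * δ) * x) := by
  have h₁ : exp (-(b + δ) * x) = exp (-b * x) * exp (-δ * x) := by
    rw [← exp_add]; ring_nf
  have h₂ : exp (-(b + 2 * δ) * x) = exp (-b * x) * exp (-δ * x) ^ 2 := by
    rw [sq, ← exp_add, ← exp_add]; ring_nf
  rw [h₁, h₂]
  ring

lemma integral_exp_neg_mul_mul_one_sub_mul_exp_sq_Ioi {b δ : ℝ} (hb : 0 < b) (hδ : 0 ≤ δ)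
    (q c : ℝ) :
    ∫ x in Ioi c, exp (-b * x) * (1 - q * exp (-δ * x)) ^ 2
      = exp (-b * c) / b - 2 * q * (exp (-(b + δ) * c) / (b + δ))
          + q ^ 2 * (exp (-(b + 2 * δ) * c) / (b + 2 * δ)) := by
  have hb₁ : 0 < b + δ := by linarith
  have hb₂ : 0 < b + 2 * δ := by linarith
  have i₀ := exp_neg_integrableOn_Ioi c hb
  have i₁ := (exp_neg_integrableOn_Ioi c hb₁).const_mul (2 * q)
  have i₂ := (exp_neg_integrableOn_Ioi c hb₂).const_mul (q ^ 2)
  have i₀₁ : IntegrableOn (fun x => exp (-b * x) - 2 * q * exp (-(b + δ) * x)) (Ioi c) :=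
    i₀.sub i₁
  simp_rw [exp_neg_mul_mul_one_sub_mul_exp_sq]
  rw [integral_add i₀₁ i₂, integral_sub i₀ i₁, integral_const_mul, integral_const_mul,
    integral_exp_neg_mul_Ioi hb, integral_exp_neg_mul_Ioi hb₁, integral_exp_neg_mul_Ioi hb₂]

lemma exp_neg_mul_mul_log_div {δ q : ℝ} (hδ : δ ≠ 0) (hq : 0 < q) (t : ℝ) :
    exp (-(δ * t) * (log q / δ)) = q ^ (-t) := by
  rw [rpow_def_of_pos hq]
  field_simp

lemma integral_Ioi_log_div_exp_neg_mul_mul_one_sub_mul_exp_sq {δ q s : ℝ} (hδ : 0 < δ)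
    (hq : 0 < q) (hs : 1 < s) :
    ∫ x in Ioi (log q / δ), exp (-(δ * (s - 1)) * x) * (1 - q * exp (-δ * x)) ^ 2
      = 2 * q ^ (1 - s) / (δ * ((s - 1) * s * (s + 1))) := by
  have hb : 0 < δ * (s - 1) := mul_pos hδ (by linarith)
  rw [integral_exp_neg_mul_mul_one_sub_mul_exp_sq_Ioi hb hδ.le,
    show δ * (s - 1) + δ = δ * s by ring, show δ * (s - 1) + 2 * δ = δ * (s + 1) by ring,
    exp_neg_mul_mul_log_div hδ.ne' hq, exp_neg_mul_mul_log_div hδ.ne' hq,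
    exp_neg_mul_mul_log_div hδ.ne' hq, neg_sub, rpow_sub hq, rpow_one, neg_add, rpow_add hq,
    rpow_neg_one, rpow_neg hq.le]
  have : s ≠ 0 := by linarith
  have : s - 1 ≠ 0 := by linarith
  have : s + 1 ≠ 0 := by linarith
  field_simp
  ring

lemma Real.Gamma_add_three {s : ℝ} (h₀ : s ≠ 0) (h₁ : s + 1 ≠ 0) (h₂ : s + 2 ≠ 0) :
    Gamma (s + 3) = s * (s + 1) * (s + 2) * Gamma s := by
  rw [show s + 3 = s + 2 + 1 by ring, Gamma_add_one h₂, show s + 2 = s + 1 + 1 by ring,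
    Gamma_add_one h₁, Gamma_add_one h₀]
  ring

theorem hulthen_ground_state_normalization_general (μ δ q : ℝ) (hδ : 0 < δ) (hq : 0 < q)
    (hcond : 2*μ > q*δ^2) :
    ∫ x in Set.Ioi (Real.log q / δ),
        Real.exp (-(2*μ/(q*δ) - δ) * x) * (1 - q * Real.exp (-δ*x))^2
      = (2 * q ^ ((1:ℝ) - 2*μ/(q*δ^2)) / δ) *
          (Real.Gamma (2*μ/(q*δ^2) - 1) / Real.Gamma (2*μ/(q*δ^2) + 2)) := by
  set s := 2*μ/(q*δ^2) with hs_def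
  have hs : 1 < s := by rw [hs_def, lt_div_iff₀ (by positivity)]; linarith
  have hrate : 2*μ/(q*δ) - δ = δ * (s - 1) := by rw [hs_def]; field_simp
  have hΓ : Gamma (s + 2) = (s - 1) * s * (s + 1) * Gamma (s - 1) := by
    convert Gamma_add_three (s := s - 1) (by linarith) (by linarith) (by linarith) using 2 <;> ring
  have hΓpos : 0 < Gamma (s - 1) := Gamma_pos_of_pos (by linarith)
  rw [hrate, integral_Ioi_log_div_exp_neg_mul_mul_one_sub_mul_exp_sq hδ hq hs, hΓ]
  field_simp

theorem hulthen_ground_state_normalization (μ δ q : ℝ) (hμ : 0 < μ) (hδ : 0 < δ) (hq : 0 < q)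
    (hcond : 2*μ > q*δ^2) :
    ∫ x in Set.Ioi (Real.log q / δ),
        Real.exp (-(2*μ/(q*δ) - δ) * x) * (1 - q * Real.exp (-δ*x))^2
      = (2 * q ^ ((1:ℝ) - 2*μ/(q*δ^2)) / δ) *
          (Real.Gamma (2*μ/(q*δ^2) - 1) / Real.Gamma (2*μ/(q*δ^2) + 2)) :=
  hulthen_ground_state_normalization_general μ δ q hδ hq hcond
end

section
/- Let δ, μ, q > 0 and let n be a nonnegative integer. The termination condition η + 1 - √(η² + v/q) = -n, with η = √(-2E)/δ and v = 2μ/δ², holds if and only if E = -(1/2)(μ/(qδ(n+1)) - δ(n+1)/2)², provided 2μ > qδ²(n+1)² (so that η > 0). -/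
/-! Both square roots can be removed reversibly: `η + n + 1 > 0`, and the condition
`2μ > qδ²(n+1)²` makes `μ/(qδ(n+1)) - δ(n+1)/2` strictly positive, which is exactly what
`√(-2E)` must equal once the termination condition is solved for `η`. -/

open Real

lemma sqrt_sq_add_eq_add_iff {η N w : ℝ} (hη : 0 ≤ η) (hN : 0 < N) :
    √(η ^ 2 + w) = η + N ↔ w = 2 * η * N + N ^ 2 := by
  rw [sqrt_eq_iff_mul_self_eq_of_pos (by positivity)]
  constructor <;> intro h <;> linear_combination -h

lemma sqrt_neg_two_mul_eq_iff {E A : ℝ} (hA : 0 < A) :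
    √(-2 * E) = A ↔ E = -(1 / 2) * A ^ 2 := by
  rw [sqrt_eq_iff_mul_self_eq_of_pos hA]
  exact ⟨fun h => by linear_combination h / 2, fun h => by linear_combination 2 * h⟩

theorem hulthen_termination_condition_general (μ δ q : ℝ) (hδ : 0 < δ) (hq : 0 < q)
    (n : ℕ) (hcond : 2*μ > q*δ^2*((n:ℝ)+1)^2)
    (E η v : ℝ) (hη : η = Real.sqrt (-2*E) / δ) (hv : v = 2*μ/δ^2) :
    η + 1 - Real.sqrt (η^2 + v/q) = -(n:ℝ) ↔
      E = -(1/2) * (μ/(q*δ*((n:ℝ)+1)) - δ*((n:ℝ)+1)/2)^2 := by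
  set N : ℝ := (n:ℝ) + 1
  have hN : 0 < N := by positivity
  have hA : 0 < μ/(q*δ*N) - δ*N/2 := by
    rw [sub_pos, div_lt_div_iff₀ two_pos (by positivity)]
    nlinarith
  calc η + 1 - √(η^2 + v/q) = -n ↔ √(η^2 + v/q) = η + N := by
        constructor <;> intro h <;> linarith
    _ ↔ v/q = 2 * η * N + N^2 := sqrt_sq_add_eq_add_iff (by rw [hη]; positivity) hN
    _ ↔ √(-2*E) = μ/(q*δ*N) - δ*N/2 := by
        rw [hη, hv]
        field_simp
        constructor <;> intro h <;> linear_combination -h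
    _ ↔ _ := sqrt_neg_two_mul_eq_iff hA

theorem hulthen_termination_condition (μ δ q : ℝ) (hμ : 0 < μ) (hδ : 0 < δ) (hq : 0 < q)
    (n : ℕ) (hcond : 2*μ > q*δ^2*((n:ℝ)+1)^2)
    (E η v : ℝ) (hη : η = Real.sqrt (-2*E) / δ) (hv : v = 2*μ/δ^2) :
    η + 1 - Real.sqrt (η^2 + v/q) = -(n:ℝ) ↔
      E = -(1/2) * (μ/(q*δ*((n:ℝ)+1)) - δ*((n:ℝ)+1)/2)^2 :=
  hulthen_termination_condition_general μ δ q hδ hq n hcond E η v hη hv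
end

section
/- Let V be smooth on (a,b), let φ₀ be a smooth nowhere-vanishing solution of -φ₀'' + Vφ₀ = E₀φ₀, and let φₙ be a smooth solution of -φₙ'' + Vφₙ = Eₙφₙ. Define ψₙ = φₙ' - (φ₀'/φ₀)φₙ = W(φ₀, φₙ)/φ₀, where W(u,v) = uv' - vu'. Then ψₙ satisfies -ψₙ'' + (V - 2(log φ₀)'')ψₙ = Eₙψₙ on (a,b). -/
theorem darboux_transformation (a b : ℝ) (hab : a < b)
    (V φ₀ φn : ℝ → ℝ) (E₀ En : ℝ)
    (hV : ContDiffOn ℝ (⊤ : ℕ∞) V (Set.Ioo a b))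
    (hφ₀ : ContDiffOn ℝ (⊤ : ℕ∞) φ₀ (Set.Ioo a b))
    (hφn : ContDiffOn ℝ (⊤ : ℕ∞) φn (Set.Ioo a b))
    (hne : ∀ x ∈ Set.Ioo a b, φ₀ x ≠ 0)
    (hode₀ : ∀ x ∈ Set.Ioo a b, -(deriv (deriv φ₀) x) + V x * φ₀ x = E₀ * φ₀ x)
    (hoden : ∀ x ∈ Set.Ioo a b, -(deriv (deriv φn) x) + V x * φn x = En * φn x)
    (ψn : ℝ → ℝ) (hψ : ψn = fun x => deriv φn x - (deriv φ₀ x / φ₀ x) * φn x) :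
    ∀ x ∈ Set.Ioo a b,
      -(deriv (deriv ψn) x)
          + (V x - 2 * (deriv (deriv φ₀) x / φ₀ x - (deriv φ₀ x / φ₀ x)^2)) * ψn x
        = En * ψn x := by
  have hopen : IsOpen (Set.Ioo a b) := isOpen_Ioo
  have hφ₀' : ContDiffOn ℝ (⊤ : ℕ∞) (deriv φ₀) (Set.Ioo a b) :=
    hφ₀.deriv_of_isOpen hopen (by simp)
  have hφn' : ContDiffOn ℝ (⊤ : ℕ∞) (deriv φn) (Set.Ioo a b) :=
    hφn.deriv_of_isOpen hopen (by simp)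
  -- differentiability at each point
  have hd : ∀ x ∈ Set.Ioo a b,
      HasDerivAt φ₀ (deriv φ₀ x) x ∧ HasDerivAt (deriv φ₀) (deriv (deriv φ₀) x) x ∧
      HasDerivAt φn (deriv φn x) x ∧ HasDerivAt (deriv φn) (deriv (deriv φn) x) x := by
    intro x hx
    have h1 : DifferentiableAt ℝ φ₀ x :=
      (hφ₀.contDiffAt (hopen.mem_nhds hx)).differentiableAt (by simp)
    have h2 : DifferentiableAt ℝ (deriv φ₀) x :=
      (hφ₀'.contDiffAt (hopen.mem_nhds hx)).differentiableAt (by simp)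
    have h3 : DifferentiableAt ℝ φn x :=
      (hφn.contDiffAt (hopen.mem_nhds hx)).differentiableAt (by simp)
    have h4 : DifferentiableAt ℝ (deriv φn) x :=
      (hφn'.contDiffAt (hopen.mem_nhds hx)).differentiableAt (by simp)
    exact ⟨h1.hasDerivAt, h2.hasDerivAt, h3.hasDerivAt, h4.hasDerivAt⟩
  set g : ℝ → ℝ := fun x => (E₀ - En) * φn x - (deriv φ₀ x / φ₀ x) * ψn x with hg
  -- ψn has derivative g on the interval
  have hA : ∀ x ∈ Set.Ioo a b, HasDerivAt ψn (g x) x := by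
    intro x hx
    obtain ⟨h1, h2, h3, h4⟩ := hd x hx
    have h0 := hne x hx
    have hquot : HasDerivAt (fun y => deriv φ₀ y / φ₀ y)
        ((deriv (deriv φ₀) x * φ₀ x - deriv φ₀ x * deriv φ₀ x) / (φ₀ x)^2) x :=
      h2.div h1 h0
    have : HasDerivAt ψn
        (deriv (deriv φn) x -
          (((deriv (deriv φ₀) x * φ₀ x - deriv φ₀ x * deriv φ₀ x) / (φ₀ x)^2) * φn x
            + (deriv φ₀ x / φ₀ x) * deriv φn x)) x := by
      rw [hψ]
      exact h4.sub (hquot.mul h3)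
    convert this using 1
    have hq'' : deriv (deriv φn) x = V x * φn x - En * φn x := by
      have := hoden x hx; linarith
    have hp'' : deriv (deriv φ₀) x = V x * φ₀ x - E₀ * φ₀ x := by
      have := hode₀ x hx; linarith
    rw [hg, hψ, hq'', hp'']
    field_simp
    ring
  -- deriv ψn = g near each point, so deriv (deriv ψn) x = deriv g x
  intro x hx
  obtain ⟨h1, h2, h3, h4⟩ := hd x hx
  have h0 := hne x hx
  have heq : deriv ψn =ᶠ[nhds x] g := by
    filter_upwards [hopen.mem_nhds hx] with y hy using (hA y hy).deriv
  have hquot : HasDerivAt (fun y => deriv φ₀ y / φ₀ y)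
      ((deriv (deriv φ₀) x * φ₀ x - deriv φ₀ x * deriv φ₀ x) / (φ₀ x)^2) x :=
    h2.div h1 h0
  have hψd : HasDerivAt ψn (g x) x := hA x hx
  have hgd : HasDerivAt g
      ((E₀ - En) * deriv φn x -
        (((deriv (deriv φ₀) x * φ₀ x - deriv φ₀ x * deriv φ₀ x) / (φ₀ x)^2) * ψn x
          + (deriv φ₀ x / φ₀ x) * g x)) x := by
    rw [hg]
    exact (h3.const_mul (E₀ - En)).sub (hquot.mul hψd)
  have hdd : deriv (deriv ψn) x =
      (E₀ - En) * deriv φn x -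
        (((deriv (deriv φ₀) x * φ₀ x - deriv φ₀ x * deriv φ₀ x) / (φ₀ x)^2) * ψn x
          + (deriv φ₀ x / φ₀ x) * g x) := by
    rw [heq.deriv_eq]; exact hgd.deriv
  rw [hdd]
  have hp'' : deriv (deriv φ₀) x = V x * φ₀ x - E₀ * φ₀ x := by
    have := hode₀ x hx; linarith
  rw [hg, hψ, hp'']
  field_simp
  ring
end

section
/- Under the hypotheses of the Darboux transformation theorem, with φₙ, φₘ eigenfunctions of H₀ = -d²/dx² + V with eigenvalues Eₙ, Eₘ, all vanishing at the endpoints a and b together with the quotients φₙφₘ·(log φ₀)' (boundary terms vanish), and ∫ₐᵇ φₙφₘ dx = ηₙ δₙₘ, the transformed functions ψₙ = φₙ' - (φ₀'/φ₀)φₙ satisfy ∫ₐᵇ ψₙψₘ dx = (Eₙ - E₀) ηₙ δₙₘ. -/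
open MeasureTheory Filter

theorem darboux_normalization (a b : ℝ) (hab : a < b)
    (V : ℝ → ℝ) (φ : ℕ → ℝ → ℝ) (E η : ℕ → ℝ)
    (hsmooth : ∀ k, ContDiff ℝ (⊤ : ℕ∞) (φ k))
    (hode : ∀ k, ∀ x ∈ Set.Ioo a b,
      -(deriv (deriv (φ k)) x) + V x * φ k x = E k * φ k x)
    (hseed : ∀ x ∈ Set.Ioo a b, φ 0 x ≠ 0)
    (hbc : ∀ k, φ k a = 0 ∧ φ k b = 0)
    (hbt : ∀ n m : ℕ,
      Tendsto (fun x => φ n x * φ m x * (deriv (φ 0) x / φ 0 x))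
        (nhdsWithin a (Set.Ioo a b)) (nhds 0) ∧
      Tendsto (fun x => φ n x * φ m x * (deriv (φ 0) x / φ 0 x))
        (nhdsWithin b (Set.Ioo a b)) (nhds 0))
    (hnorm : ∀ n m : ℕ, ∫ x in Set.Ioo a b, φ n x * φ m x
      = if n = m then η n else 0)
    (ψ : ℕ → ℝ → ℝ)
    (hψ : ∀ k, ψ k = fun x => deriv (φ k) x - (deriv (φ 0) x / φ 0 x) * φ k x)
    (hint : ∀ n m : ℕ, IntegrableOn (fun x => ψ n x * ψ m x) (Set.Ioo a b)) :
    ∀ n m : ℕ, 1 ≤ n → 1 ≤ m →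
      ∫ x in Set.Ioo a b, ψ n x * ψ m x
        = if n = m then (E n - E 0) * η n else 0 := by
  intro n m _ _
  -- differentiability facts
  have hdiff : ∀ k, Differentiable ℝ (φ k) := fun k =>
    (hsmooth k).differentiable (by simp)
  have hderivCD : ∀ k, ContDiff ℝ (⊤ : ℕ∞) (deriv (φ k)) := fun k =>
    ((contDiff_infty_iff_deriv).mp ((hsmooth k).of_le (by simp))).2
  have hdiff' : ∀ k, Differentiable ℝ (deriv (φ k)) := fun k =>
    (hderivCD k).differentiable (by simp)
  -- the auxiliary function g
  set g : ℝ → ℝ := fun x =>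
    φ n x * deriv (φ m) x - φ n x * φ m x * (deriv (φ 0) x / φ 0 x) with hg
  set h : ℝ → ℝ := fun x =>
    ψ n x * ψ m x + (E 0 - E m) * (φ n x * φ m x) with hh
  -- derivative of g on Ioo
  have hderiv : ∀ x ∈ Set.Ioo a b, HasDerivAt g (h x) x := by
    intro x hx
    have hr0 : φ 0 x ≠ 0 := hseed x hx
    have hpn : HasDerivAt (φ n) (deriv (φ n) x) x := (hdiff n x).hasDerivAt
    have hpm : HasDerivAt (φ m) (deriv (φ m) x) x := (hdiff m x).hasDerivAt
    have hqm : HasDerivAt (deriv (φ m)) (deriv (deriv (φ m)) x) x :=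
      (hdiff' m x).hasDerivAt
    have hr : HasDerivAt (φ 0) (deriv (φ 0) x) x := (hdiff 0 x).hasDerivAt
    have hr' : HasDerivAt (deriv (φ 0)) (deriv (deriv (φ 0)) x) x :=
      (hdiff' 0 x).hasDerivAt
    have H : HasDerivAt g
        ((deriv (φ n) x * deriv (φ m) x + φ n x * deriv (deriv (φ m)) x)
          - ((deriv (φ n) x * φ m x + φ n x * deriv (φ m) x)
              * (deriv (φ 0) x / φ 0 x)
            + φ n x * φ m x *
              ((deriv (deriv (φ 0)) x * φ 0 x - deriv (φ 0) x * deriv (φ 0) x)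
                / (φ 0 x)^2))) x :=
      (hpn.mul hqm).sub ((hpn.mul hpm).mul (hr'.div hr hr0))
    have eM : deriv (deriv (φ m)) x = V x * φ m x - E m * φ m x := by
      have := hode m x hx; linarith
    have e0 : deriv (deriv (φ 0)) x = V x * φ 0 x - E 0 * φ 0 x := by
      have := hode 0 x hx; linarith
    convert H using 1
    rw [hh, hψ n, hψ m]
    simp only [eM, e0]
    field_simp
    ring
  -- boundary limits of g
  have hcont : ∀ k, Continuous (φ k) := fun k => (hsmooth k).continuous
  have hcont' : ∀ k, Continuous (deriv (φ k)) := fun k =>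
    (hderivCD k).continuous
  have hta : Tendsto g (nhdsWithin a (Set.Ioo a b)) (nhds 0) := by
    have h1 : Tendsto (fun x => φ n x * deriv (φ m) x)
        (nhdsWithin a (Set.Ioo a b)) (nhds (φ n a * deriv (φ m) a)) :=
      (((hcont n).tendsto a).mul ((hcont' m).tendsto a)).mono_left
        nhdsWithin_le_nhds
    have h2 := (hbt n m).1
    have := h1.sub h2
    simpa [(hbc n).1] using this
  have htb : Tendsto g (nhdsWithin b (Set.Ioo a b)) (nhds 0) := by
    have h1 : Tendsto (fun x => φ n x * deriv (φ m) x)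
        (nhdsWithin b (Set.Ioo a b)) (nhds (φ n b * deriv (φ m) b)) :=
      (((hcont n).tendsto b).mul ((hcont' m).tendsto b)).mono_left
        nhdsWithin_le_nhds
    have h2 := (hbt n m).2
    have := h1.sub h2
    simpa [(hbc n).1, (hbc n).2] using this
  -- integrability of h on Ioo
  have hintφ : IntegrableOn (fun x => φ n x * φ m x) (Set.Ioo a b) := by
    exact (((hcont n).mul (hcont m)).continuousOn).integrableOn_Icc.mono_set
      Set.Ioo_subset_Icc_self
  have hintH : IntegrableOn h (Set.Ioo a b) := by
    exact (hint n m).add (hintφ.const_mul _)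
  have hintH' : IntervalIntegrable h volume a b := by
    rw [intervalIntegrable_iff_integrableOn_Ioo_of_le hab.le]
    exact hintH
  -- FTC
  have key : ∫ x in a..b, h x = 0 - 0 :=
    intervalIntegral.integral_eq_sub_of_hasDerivAt_of_tendsto hab hderiv hintH'
      (by rwa [← nhdsWithin_Ioo_eq_nhdsGT hab])
      (by rwa [← nhdsWithin_Ioo_eq_nhdsLT hab])
  rw [intervalIntegral.integral_of_le hab.le,
    MeasureTheory.integral_Ioc_eq_integral_Ioo] at key
  have split : ∫ x in Set.Ioo a b, h x
      = (∫ x in Set.Ioo a b, ψ n x * ψ m x)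
        + (E 0 - E m) * ∫ x in Set.Ioo a b, φ n x * φ m x := by
    rw [hh]
    rw [MeasureTheory.integral_add (hint n m) (hintφ.const_mul _),
      MeasureTheory.integral_const_mul]
  rw [split, hnorm n m] at key
  by_cases hnm : n = m
  · subst hnm
    simp only [if_pos rfl, if_true] at key ⊢
    linarith
  · simp only [if_neg hnm] at key ⊢
    linarith
end

section
/- Let q > 0, v > 0, j a nonnegative integer, n ≥ j an integer with q(n+1)² < v (wide enough for positive decay rate), and set ε = v/(2q(n+1)) - (n+1)/2 > 0. Then the function φ(r) = e^{-ε r}(1 - q e^{-r})^{j+1} · ₂F₁(j - n, j + 1 + v/(q(n+1)); v/(q(n+1)) - n; q e^{-r}) satisfies -φ''(r) + (j(j+1) q e^{-r}/(1 - q e^{-r})² - v e^{-r}/(1 - q e^{-r}))φ(r) = -ε² φ(r) for r > log q. -/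
/-!
With `z = q e^{-r}` one has `d/dr = -z d/dz`, so for `φ(r) = e^{-εr} G(z)` the radial equation
becomes `z (1-z)² G'' + c (1-z)² G' = (j(j+1) - (v/q)(1-z)) G` with `c = 2ε + 1`.
Substituting `G = (1-z)^{j+1} F` turns this into the hypergeometric equation for `F` with
parameters `a + b = c + 2j + 1` and `ab = (j+1)(j+c) - v/q`. Since `a = j - n` is a nonpositive
integer, `F` is a polynomial, and the hypergeometric equation holds coefficientwise by the
recurrence `(k+1)(c+k) C_{k+1} = (a+k)(b+k) C_k` of the hypergeometric coefficients.
-/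

open Real

/-- The Gauss hypergeometric series ₂F₁(a, b; c; z) with real parameters. -/
noncomputable def hyp2F1R (a b c z : ℝ) : ℝ :=
  ∑' k : ℕ, (ascPochhammer ℝ k).eval a * (ascPochhammer ℝ k).eval b
    / ((ascPochhammer ℝ k).eval c * (k.factorial : ℝ)) * z ^ k

open Polynomial

theorem hyp2F1R_eq_tsum (a b c z : ℝ) :
    hyp2F1R a b c z = ∑' k, ordinaryHypergeometricCoefficient a b c k * z ^ k := by
  unfold hyp2F1R
  congr! 2 with k
  ring

theorem ordinaryHypergeometricCoefficient_neg_nat_of_lt {m k : ℕ} (b c : ℝ) (h : m < k) :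
    ordinaryHypergeometricCoefficient (-m : ℝ) b c k = 0 := by
  simp [ascPochhammer_eval_neg_coe_nat_of_lt h]

theorem ordinaryHypergeometricCoefficient_succ (a b : ℝ) {c : ℝ} (hc : ∀ k : ℕ, c ≠ -k)
    (k : ℕ) :
    (k + 1) * (c + k) * ordinaryHypergeometricCoefficient a b c (k + 1)
      = (a + k) * (b + k) * ordinaryHypergeometricCoefficient a b c k := by
  have hck : c + k ≠ 0 := fun h => hc k (by linear_combination h)
  have hpoch : (ascPochhammer ℝ k).eval c ≠ 0 := by
    rw [Ne, ascPochhammer_eval_eq_zero_iff]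
    rintro ⟨i, -, hi⟩
    exact hc i (by linear_combination hi)
  simp only [ordinaryHypergeometricCoefficient, ascPochhammer_succ_eval, Nat.factorial_succ,
    Nat.cast_mul, Nat.cast_succ]
  field_simp

/-- The polynomial `₂F₁(-m, b; c; X)` to which the hypergeometric series terminates. -/
noncomputable def hyp2F1Poly (m : ℕ) (b c : ℝ) : ℝ[X] :=
  ∑ k ∈ Finset.range (m + 1), C (ordinaryHypergeometricCoefficient (-m : ℝ) b c k) * X ^ k

theorem coeff_hyp2F1Poly (m : ℕ) (b c : ℝ) (k : ℕ) :
    (hyp2F1Poly m b c).coeff k = ordinaryHypergeometricCoefficient (-m : ℝ) b c k := by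
  simp only [hyp2F1Poly, finsetSum_coeff, coeff_C_mul_X_pow, Finset.sum_ite_eq,
    Finset.mem_range, Nat.lt_succ_iff]
  split_ifs with h
  · rfl
  · exact (ordinaryHypergeometricCoefficient_neg_nat_of_lt b c (by omega)).symm

theorem hyp2F1R_neg_nat (m : ℕ) (b c z : ℝ) :
    hyp2F1R (-m) b c z = (hyp2F1Poly m b c).eval z := by
  rw [hyp2F1R_eq_tsum, tsum_eq_sum (s := Finset.range (m + 1)), hyp2F1Poly, eval_finsetSum]
  · simp
  · intro k hk
    rw [ordinaryHypergeometricCoefficient_neg_nat_of_lt b c (by simpa using hk), zero_mul]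

noncomputable def hypergeometricOperator (a b c : ℝ) (p : ℝ[X]) : ℝ[X] :=
  X * (1 - X) * derivative (derivative p) + (C c - C (a + b + 1) * X) * derivative p
    - C (a * b) * p

theorem coeff_hypergeometricOperator (a b c : ℝ) (p : ℝ[X]) (k : ℕ) :
    (hypergeometricOperator a b c p).coeff k
      = (k + 1) * (c + k) * p.coeff (k + 1) - (a + k) * (b + k) * p.coeff k := by
  have hop : hypergeometricOperator a b c p
      = X * derivative (derivative p) - X * (X * derivative (derivative p))
        + C c * derivative p - C (a + b + 1) * (X * derivative p) - C (a * b) * p := by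
    rw [hypergeometricOperator]
    ring
  rw [hop]
  rcases k with _ | _ | k <;>
    simp only [coeff_sub, coeff_add, coeff_C_mul, coeff_X_mul, coeff_X_mul_zero,
      coeff_derivative] <;>
    push_cast <;> ring

theorem hypergeometricOperator_hyp2F1Poly (m : ℕ) (b : ℝ) {c : ℝ}
    (hc : ∀ k : ℕ, c ≠ -k) :
    hypergeometricOperator (-m) b c (hyp2F1Poly m b c) = 0 := by
  ext k
  rw [coeff_hypergeometricOperator, coeff_hyp2F1Poly, coeff_hyp2F1Poly,
    ordinaryHypergeometricCoefficient_succ _ _ hc, coeff_zero, sub_self]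

theorem one_sub_X_mul_derivative_one_sub_X_pow (j : ℕ) :
    (1 - X) * derivative ((1 - X : ℝ[X]) ^ j) = -(j : ℝ[X]) * (1 - X) ^ j := by
  rcases j with _ | j
  · simp
  · rw [derivative_pow]
    simp only [derivative_sub, derivative_one, derivative_X, Nat.add_sub_cancel, C_eq_natCast]
    push_cast
    ring

theorem derivative_one_sub_X_pow_succ (j : ℕ) :
    derivative ((1 - X : ℝ[X]) ^ (j + 1)) = -((j : ℝ[X]) + 1) * (1 - X) ^ j := by
  rw [derivative_pow]
  simp only [derivative_sub, derivative_one, derivative_X, Nat.add_sub_cancel, C_eq_natCast]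
  push_cast
  ring

theorem one_sub_X_pow_mul_ode_of_hypergeometricOperator_eq_zero {a b c : ℝ} {P : ℝ[X]}
    (hP : hypergeometricOperator a b c P = 0) (j : ℕ) (hab : a + b = c + 2 * j + 1) :
    X * (1 - X) ^ 2 * derivative (derivative ((1 - X) ^ (j + 1) * P))
      + C c * (1 - X) ^ 2 * derivative ((1 - X) ^ (j + 1) * P)
      = (C ((j : ℝ) * (j + 1)) - C ((j + 1) * (j + c) - a * b) * (1 - X))
        * ((1 - X) ^ (j + 1) * P) := by
  have hD := one_sub_X_mul_derivative_one_sub_X_pow j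
  have hab' : C a + C b = C c + 2 * (j : ℝ[X]) + 1 := by
    simpa only [map_add, map_mul, map_natCast, map_ofNat, map_one] using congrArg C hab
  rw [hypergeometricOperator] at hP
  simp only [derivative_mul, derivative_one_sub_X_pow_succ, derivative_add, derivative_neg,
    derivative_natCast, derivative_one]
  simp only [map_add, map_mul, map_sub, map_natCast, map_one] at hP ⊢
  -- `hD` eliminates `derivative ((1 - X) ^ j)`, avoiding the truncated exponent `j - 1`
  linear_combination (-((j : ℝ[X]) + 1) * X * (1 - X) * P) * hD + (1 - X) ^ (j + 2) * hP
    + X * (1 - X) ^ (j + 2) * derivative P * hab'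

theorem hasDerivAt_exp_mul_comp_mul_exp_neg {G : ℝ → ℝ} {G' : ℝ} (ε q r : ℝ)
    (hG : HasDerivAt G G' (q * exp (-r))) :
    HasDerivAt (fun s => exp (-ε * s) * G (q * exp (-s)))
      (exp (-ε * r) * (-ε * G (q * exp (-r)) - q * exp (-r) * G')) r := by
  have hexp : HasDerivAt (fun s => exp (-ε * s)) (exp (-ε * r) * -ε) r := by
    simpa using ((hasDerivAt_id r).const_mul (-ε)).exp
  have hz : HasDerivAt (fun s => q * exp (-s)) (-(q * exp (-r))) r := by
    simpa using ((hasDerivAt_neg r).exp).const_mul q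
  refine (hexp.mul (hG.comp r hz)).congr_deriv ?_
  simp only [Function.comp_apply]
  ring

theorem deriv_deriv_exp_mul_comp_mul_exp_neg {G G' G'' : ℝ → ℝ}
    (hG : ∀ z, HasDerivAt G (G' z) z) (hG' : ∀ z, HasDerivAt G' (G'' z) z) (ε q r : ℝ) :
    deriv (deriv fun s => exp (-ε * s) * G (q * exp (-s))) r
      = exp (-ε * r) * (ε ^ 2 * G (q * exp (-r))
        + (2 * ε + 1) * (q * exp (-r)) * G' (q * exp (-r))
        + (q * exp (-r)) ^ 2 * G'' (q * exp (-r))) := by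
  have hH : ∀ z, HasDerivAt (fun z => -ε * G z - z * G' z) (-ε * G' z - (G' z + z * G'' z)) z :=
    fun z => ((hG z).const_mul (-ε)).sub ((hasDerivAt_id z).mul (hG' z) |>.congr_deriv (by simp))
  have hderiv : deriv (fun s => exp (-ε * s) * G (q * exp (-s)))
      = fun s => exp (-ε * s) * (fun z => -ε * G z - z * G' z) (q * exp (-s)) :=
    funext fun s => (hasDerivAt_exp_mul_comp_mul_exp_neg ε q s (hG _)).deriv
  rw [hderiv, (hasDerivAt_exp_mul_comp_mul_exp_neg ε q r (hH _)).deriv]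
  ring

theorem extended_hulthen_eigenfunction_general (q v : ℝ) (hq : 0 < q)
    (j n : ℕ) (hjn : j ≤ n)
    (ε : ℝ) (hε : ε = v/(2*q*((n:ℝ)+1)) - ((n:ℝ)+1)/2) (hεpos : 0 < ε)
    (φ : ℝ → ℝ)
    (hφ : φ = fun r => Real.exp (-ε * r) * (1 - q * Real.exp (-r)) ^ (j+1) *
      hyp2F1R ((j:ℝ) - n) ((j:ℝ) + 1 + v/(q*((n:ℝ)+1)))
        (v/(q*((n:ℝ)+1)) - n) (q * Real.exp (-r))) :
    ∀ r : ℝ, Real.log q < r →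
      -(deriv (deriv φ) r)
          + ((j:ℝ)*((j:ℝ)+1) * q * Real.exp (-r) / (1 - q * Real.exp (-r))^2
              - v * Real.exp (-r) / (1 - q * Real.exp (-r))) * φ r
        = -(ε^2) * φ r := by
  intro r hr
  set b := (j : ℝ) + 1 + v / (q * ((n : ℝ) + 1))
  set c := v / (q * ((n : ℝ) + 1)) - n
  have ha : (j : ℝ) - n = -(n - j : ℕ) := by push_cast [Nat.cast_sub hjn]; ring
  have hc : c = 2 * ε + 1 := by simp only [c, hε]; field_simp; ring
  have hc_ne : ∀ k : ℕ, c ≠ -k := fun k h => by linarith [(k.cast_nonneg : (0 : ℝ) ≤ k)]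
  have hG_ode :=
    one_sub_X_pow_mul_ode_of_hypergeometricOperator_eq_zero
      (hypergeometricOperator_hyp2F1Poly (n - j) b hc_ne) j (by rw [← ha]; ring)
  have hv_eq : q * (((j : ℝ) + 1) * (j + c) - -((n - j : ℕ) : ℝ) * b) = v := by
    rw [← ha]; simp only [b, c]; field_simp; ring
  set G : ℝ[X] := (1 - X) ^ (j + 1) * hyp2F1Poly (n - j) b c
  have hφG : φ = fun s => exp (-ε * s) * G.eval (q * exp (-s)) := by
    rw [hφ]
    funext s
    simp only [G, ha, hyp2F1R_neg_nat, eval_mul, eval_pow, eval_sub, eval_one, eval_X]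
    ring
  have hz : q * exp (-r) < 1 := by
    rw [exp_neg, ← div_eq_mul_inv, div_lt_one (exp_pos r), ← exp_log hq]
    exact exp_lt_exp.mpr hr
  have hGz := congrArg (eval (q * exp (-r))) hG_ode
  simp only [eval_add, eval_mul, eval_pow, eval_sub, eval_C, eval_X, eval_one] at hGz
  rw [hφG, deriv_deriv_exp_mul_comp_mul_exp_neg (fun z => G.hasDerivAt z)
    (fun z => (derivative G).hasDerivAt z)]
  have hu : 1 - q * exp (-r) ≠ 0 := by linarith
  field_simp
  rw [← hv_eq, hc]
  rw [hc] at hGz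
  linear_combination (-(q * exp (-r))) * hGz

theorem extended_hulthen_eigenfunction (q v : ℝ) (hq : 0 < q) (hv : 0 < v)
    (j n : ℕ) (hjn : j ≤ n) (hbound : q * ((n:ℝ)+1)^2 < v)
    (ε : ℝ) (hε : ε = v/(2*q*((n:ℝ)+1)) - ((n:ℝ)+1)/2) (hεpos : 0 < ε)
    (φ : ℝ → ℝ)
    (hφ : φ = fun r => Real.exp (-ε * r) * (1 - q * Real.exp (-r)) ^ (j+1) *
      hyp2F1R ((j:ℝ) - n) ((j:ℝ) + 1 + v/(q*((n:ℝ)+1)))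
        (v/(q*((n:ℝ)+1)) - n) (q * Real.exp (-r))) :
    ∀ r : ℝ, Real.log q < r →
      -(deriv (deriv φ) r)
          + ((j:ℝ)*((j:ℝ)+1) * q * Real.exp (-r) / (1 - q * Real.exp (-r))^2
              - v * Real.exp (-r) / (1 - q * Real.exp (-r))) * φ r
        = -(ε^2) * φ r :=
  extended_hulthen_eigenfunction_general q v hq j n hjn ε hε hεpos φ hφ
end
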